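/- arXiv:1512.01179 — 2 statements merged into one kernel-verified Lean document; each statement's English description precedes it below -/
import Mathlib

section
/- Let d ≥ 2. For k = (k_1,…,k_d) ∈ {0,1}^d let J_k = ∏_{l=1}^d J_{k_l} ⊆ ℝ^d, where J_0 = (−∞,0) and J_1 = [0,∞). If f ∈ L^∞(ℝ^d) and x ∈ ℝ^d are such that for every k ∈ {0,1}^d the limit f(x,J_k) := lim_{y→0, y∈J_k} f(x−y) exists, then lim_{θ→0⁺} (P_θ^d * f)(x) = 2^{−d} Σ_{k∈{0,1}^d} f(x,J_k). -/
open MeasureTheory Filter Topology Real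

/-- The Poisson kernel on `ℝ`: `P θ t = θ / (π (θ² + t²))`. -/
noncomputable def poissonKernelLine (θ t : ℝ) : ℝ := θ / (π * (θ ^ 2 + t ^ 2))

/-- The product Poisson kernel on `ℝ^d`: `P_θ^d(x) = ∏_j P_θ(x_j)`. -/
noncomputable def poissonKernelPi (d : ℕ) (θ : ℝ) (x : Fin d → ℝ) : ℝ :=
  ∏ j, poissonKernelLine θ (x j)

/-- The two half-lines `J_0 = (-∞,0)` and `J_1 = [0,∞)`. -/
def halfLine : Fin 2 → Set ℝ := ![Set.Iio 0, Set.Ici 0]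

/-- The orthant `J_k = ∏_l J_{k_l} ⊆ ℝ^d` for `k ∈ {0,1}^d`. -/
def orthant (d : ℕ) (k : Fin d → Fin 2) : Set (Fin d → ℝ) :=
  {y | ∀ j, y j ∈ halfLine (k j)}

open Set Metric
open scoped ENNReal

/-!
The product kernel `P_θ^d` is a nonnegative approximate identity: it has total mass one and its
mass in every ball around `0` tends to one as `θ → 0⁺`. Being a product of even kernels, it also
puts mass exactly `2^{-d}` on each orthant `J_k`. Split `∫ P_θ^d(y) f(x - y) dy` over the `2^d`
orthants: on `J_k` the integrand is within `ε P_θ^d(y)` of `P_θ^d(y) f(x, J_k)` near `0` and is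
bounded by `‖f‖_∞ P_θ^d(y)` elsewhere, so the `J_k` piece tends to `2^{-d} f(x, J_k)`.
The one-dimensional masses all come from the primitive `arctan (t / θ) / π` of `P_θ`.
-/

section PoissonKernelLine

variable {θ : ℝ}

lemma poissonKernelLine_eq_cauchyPDFReal (hθ : 0 ≤ θ) :
    poissonKernelLine θ = ProbabilityTheory.cauchyPDFReal 0 θ.toNNReal := by
  ext t
  rw [poissonKernelLine, ProbabilityTheory.cauchyPDFReal_def, Real.coe_toNNReal _ hθ]
  field_simp
  ring

lemma poissonKernelLine_nonneg (hθ : 0 ≤ θ) (t : ℝ) : 0 ≤ poissonKernelLine θ t := by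
  unfold poissonKernelLine
  positivity

lemma integrable_poissonKernelLine (hθ : 0 ≤ θ) : Integrable (poissonKernelLine θ) := by
  rw [poissonKernelLine_eq_cauchyPDFReal hθ]
  exact ProbabilityTheory.integrable_cauchyPDFReal 0

lemma integral_poissonKernelLine (hθ : 0 < θ) : ∫ t, poissonKernelLine θ t = 1 := by
  rw [poissonKernelLine_eq_cauchyPDFReal hθ.le]
  exact ProbabilityTheory.integral_cauchyPDFReal_eq_one 0 (by simpa using hθ)

lemma hasDerivAt_arctan_div_div_pi (hθ : 0 < θ) (t : ℝ) :
    HasDerivAt (fun t => arctan (t / θ) / π) (poissonKernelLine θ t) t := by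
  refine ((((hasDerivAt_id t).div_const θ).arctan).div_const π).congr_deriv ?_
  rw [poissonKernelLine, id]
  field_simp

lemma integral_Ioi_poissonKernelLine (hθ : 0 < θ) (c : ℝ) :
    ∫ t in Ioi c, poissonKernelLine θ t = 2⁻¹ - arctan (c / θ) / π := by
  have hlim : Tendsto (fun t => arctan (t / θ) / π) atTop (𝓝 2⁻¹) := by
    have : Tendsto (fun t => arctan (t / θ)) atTop (𝓝 (π / 2)) :=
      (tendsto_arctan_atTop.mono_right nhdsWithin_le_nhds).comp (tendsto_id.atTop_div_const hθ)
    convert this.div_const π using 2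
    field_simp
  exact integral_Ioi_of_hasDerivAt_of_tendsto' (fun t _ => hasDerivAt_arctan_div_div_pi hθ t)
    (integrable_poissonKernelLine hθ.le).integrableOn hlim

lemma integral_halfLine_poissonKernelLine (hθ : 0 < θ) (i : Fin 2) :
    ∫ t in halfLine i, poissonKernelLine θ t = 2⁻¹ := by
  have hIci : ∫ t in Ici 0, poissonKernelLine θ t = 2⁻¹ := by
    simp [integral_Ici_eq_integral_Ioi, integral_Ioi_poissonKernelLine hθ]
  fin_cases i
  · change ∫ t in Iio 0, poissonKernelLine θ t = 2⁻¹
    rw [← compl_Ici, setIntegral_compl measurableSet_Ici (integrable_poissonKernelLine hθ.le),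
      integral_poissonKernelLine hθ, hIci]
    norm_num
  · exact hIci

lemma integral_ball_poissonKernelLine (hθ : 0 < θ) {δ : ℝ} (hδ : 0 ≤ δ) :
    ∫ t in ball 0 δ, poissonKernelLine θ t = 2 * arctan (δ / θ) / π := by
  rw [Real.ball_eq_Ioo, ← integral_Ioc_eq_integral_Ioo,
    ← intervalIntegral.integral_of_le (by linarith),
    intervalIntegral.integral_eq_sub_of_hasDerivAt (fun t _ => hasDerivAt_arctan_div_div_pi hθ t)
      (integrable_poissonKernelLine hθ.le).intervalIntegrable]
  simp only [zero_sub, zero_add, neg_div, arctan_neg]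
  ring

lemma tendsto_integral_ball_poissonKernelLine {δ : ℝ} (hδ : 0 < δ) :
    Tendsto (fun θ => ∫ t in ball 0 δ, poissonKernelLine θ t) (𝓝[>] 0) (𝓝 1) := by
  have hlim : Tendsto (fun θ => 2 * arctan (δ / θ) / π) (𝓝[>] 0) (𝓝 1) := by
    have : Tendsto (fun θ => arctan (δ / θ)) (𝓝[>] 0) (𝓝 (π / 2)) :=
      (tendsto_arctan_atTop.mono_right nhdsWithin_le_nhds).comp
        (tendsto_inv_nhdsGT_zero.const_mul_atTop hδ)
    convert (this.const_mul 2).div_const π using 2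
    field_simp
  refine hlim.congr' ?_
  filter_upwards [self_mem_nhdsWithin] with θ hθ
  exact (integral_ball_poissonKernelLine hθ hδ.le).symm

end PoissonKernelLine

section Orthant

lemma mem_halfLine_iff {t : ℝ} {i : Fin 2} : t ∈ halfLine i ↔ (if 0 ≤ t then 1 else 0) = i := by
  fin_cases i <;> by_cases ht : 0 ≤ t <;> simp [halfLine, ht]
  linarith

lemma orthant_eq_univ_pi (d : ℕ) (k : Fin d → Fin 2) :
    orthant d k = univ.pi fun j => halfLine (k j) := by
  ext y
  simp [orthant]

lemma measurableSet_halfLine (i : Fin 2) : MeasurableSet (halfLine i) := by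
  fin_cases i
  exacts [measurableSet_Iio, measurableSet_Ici]

lemma orthant_eq_preimage (d : ℕ) (k : Fin d → Fin 2) :
    orthant d k = (fun y j => if 0 ≤ y j then 1 else 0) ⁻¹' {k} := by
  ext y
  simp [orthant, mem_halfLine_iff, funext_iff]

lemma measurableSet_orthant (d : ℕ) (k : Fin d → Fin 2) : MeasurableSet (orthant d k) := by
  rw [orthant_eq_univ_pi]
  exact MeasurableSet.univ_pi fun j => measurableSet_halfLine (k j)

lemma pairwise_disjoint_orthant (d : ℕ) : Pairwise (Function.onFun Disjoint (orthant d)) := by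
  rw [show orthant d = _ from funext (orthant_eq_preimage d)]
  exact pairwise_disjoint_fiber _

lemma iUnion_orthant (d : ℕ) : ⋃ k, orthant d k = univ := by
  simp only [orthant_eq_preimage, ← preimage_iUnion, iUnion_of_singleton, preimage_univ]

theorem integral_eq_sum_orthant {d : ℕ} {E : Type*} [NormedAddCommGroup E] [NormedSpace ℝ E]
    {μ : Measure (Fin d → ℝ)} {F : (Fin d → ℝ) → E} (hF : Integrable F μ) :
    ∫ y, F y ∂μ = ∑ k, ∫ y in orthant d k, F y ∂μ := by
  rw [← setIntegral_univ, ← iUnion_orthant d]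
  exact integral_iUnion_fintype (measurableSet_orthant d) (pairwise_disjoint_orthant d)
    fun _ => hF.integrableOn

end Orthant

theorem setIntegral_univ_pi_prod {ι 𝕜 : Type*} [Fintype ι] [RCLike 𝕜] {E : ι → Type*}
    [∀ i, MeasurableSpace (E i)] (μ : ∀ i, Measure (E i)) [∀ i, SigmaFinite (μ i)]
    (f : ∀ i, E i → 𝕜) (s : ∀ i, Set (E i)) :
    ∫ y in univ.pi s, ∏ i, f i (y i) ∂Measure.pi μ = ∏ i, ∫ t in s i, f i t ∂μ i := by
  rw [Measure.restrict_pi_pi, integral_fintype_prod_eq_prod]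

section PoissonKernelPi

variable {d : ℕ} {θ : ℝ}

lemma setIntegral_univ_pi_poissonKernelPi (s : Fin d → Set ℝ) :
    ∫ y in univ.pi s, poissonKernelPi d θ y = ∏ j, ∫ t in s j, poissonKernelLine θ t :=
  setIntegral_univ_pi_prod (fun _ => volume) (fun _ => poissonKernelLine θ) s

lemma poissonKernelPi_nonneg (hθ : 0 ≤ θ) (y : Fin d → ℝ) : 0 ≤ poissonKernelPi d θ y :=
  Finset.prod_nonneg fun _ _ => poissonKernelLine_nonneg hθ _

lemma integrable_poissonKernelPi (hθ : 0 ≤ θ) : Integrable (poissonKernelPi d θ) :=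
  Integrable.fintype_prod fun _ => integrable_poissonKernelLine hθ

lemma integral_poissonKernelPi (hθ : 0 < θ) : ∫ y, poissonKernelPi d θ y = 1 := by
  simpa [integral_poissonKernelLine hθ] using
    setIntegral_univ_pi_poissonKernelPi (d := d) (θ := θ) fun _ => univ

lemma tendsto_integral_ball_poissonKernelPi {δ : ℝ} (hδ : 0 < δ) :
    Tendsto (fun θ => ∫ y in ball 0 δ, poissonKernelPi d θ y) (𝓝[>] 0) (𝓝 1) := by
  simp_rw [ball_pi _ hδ, setIntegral_univ_pi_poissonKernelPi, Pi.zero_apply, Finset.prod_const,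
    Finset.card_univ, Fintype.card_fin]
  simpa using (tendsto_integral_ball_poissonKernelLine hδ).pow d

lemma integral_orthant_poissonKernelPi (hθ : 0 < θ) (k : Fin d → Fin 2) :
    ∫ y in orthant d k, poissonKernelPi d θ y = 2⁻¹ ^ d := by
  simp [orthant_eq_univ_pi, setIntegral_univ_pi_poissonKernelPi,
    integral_halfLine_poissonKernelLine hθ]

end PoissonKernelPi


lemma MeasureTheory.MemLp.exists_ae_norm_le {α E : Type*} {m : MeasurableSpace α} {μ : Measure α}
    [NormedAddCommGroup E] {g : α → E} (hg : MemLp g ∞ μ) :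
    ∃ C : ℝ, 0 ≤ C ∧ ∀ᵐ x ∂μ, ‖g x‖ ≤ C := by
  have hg_top : eLpNormEssSup g μ < ∞ := by simpa only [eLpNorm_exponent_top] using hg.2
  obtain ⟨C, hC⟩ := eLpNormEssSup_lt_top_iff_isBoundedUnder.mp hg_top
  exact ⟨C, C.2, hC⟩

theorem tendsto_setIntegral_smul_sub_of_tendsto_nhdsWithin {X E ι : Type*} [PseudoMetricSpace X]
    [MeasurableSpace X] [OpensMeasurableSpace X] [NormedAddCommGroup E] [NormedSpace ℝ E]
    {μ : Measure X} {l : Filter ι} {φ : ι → X → ℝ} {x₀ : X} {g : X → E} {s : Set X} {c : E}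
    (hφ_nonneg : ∀ᶠ i in l, ∀ x, 0 ≤ φ i x) (hφ_int : ∀ᶠ i in l, Integrable (φ i) μ)
    (hφ_one : ∀ᶠ i in l, ∫ x, φ i x ∂μ = 1)
    (hφ_ball : ∀ δ > 0, Tendsto (fun i => ∫ x in ball x₀ δ, φ i x ∂μ) l (𝓝 1))
    (hg : MemLp g ∞ μ) (hs : MeasurableSet s) (hgc : Tendsto g (𝓝[s] x₀) (𝓝 c)) :
    Tendsto (fun i => ∫ x in s, φ i x • (g x - c) ∂μ) l (𝓝 0) := by
  obtain ⟨C, hC0, hC⟩ := (hg.sub (memLp_top_const c)).exists_ae_norm_le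
  rw [Metric.tendsto_nhds]
  intro ε hε
  obtain ⟨δ, hδ, hnear⟩ := Metric.tendsto_nhdsWithin_nhds.mp hgc (ε / 2) (half_pos hε)
  have hfar : ∀ᶠ i in l, C * (1 - ∫ x in ball x₀ δ, φ i x ∂μ) < ε / 2 := by
    have := ((tendsto_const_nhds (x := (1 : ℝ))).sub (hφ_ball δ hδ)).const_mul C
    rw [sub_self, mul_zero] at this
    exact this.eventually_lt_const (half_pos hε)
  filter_upwards [hφ_nonneg, hφ_int, hφ_one, hfar] with i h0 hint h1 hfar
  -- on `ball x₀ δ` the factor `‖g x - c‖` is small, off it the mass of `φ i` is small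
  have hbound : ∀ᵐ x ∂μ.restrict s, ‖φ i x • (g x - c)‖
      ≤ ε / 2 * φ i x + C * (ball x₀ δ)ᶜ.indicator (φ i) x := by
    filter_upwards [ae_restrict_mem hs, ae_restrict_of_ae hC] with x hxs (hxC : ‖g x - c‖ ≤ C)
    rw [norm_smul, Real.norm_of_nonneg (h0 x)]
    by_cases hx : x ∈ ball x₀ δ
    · rw [indicator_of_notMem (notMem_compl_iff.mpr hx), mul_zero, add_zero, mul_comm (ε / 2)]
      exact mul_le_mul_of_nonneg_left (dist_eq_norm (g x) c ▸ (hnear hxs hx).le) (h0 x)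
    · rw [indicator_of_mem hx]
      linarith [mul_le_mul_of_nonneg_left hxC (h0 x), mul_nonneg (half_pos hε).le (h0 x)]
  have hmaj : Integrable (fun x => ε / 2 * φ i x + C * (ball x₀ δ)ᶜ.indicator (φ i) x) μ :=
    (hint.const_mul _).add ((hint.indicator measurableSet_ball.compl).const_mul C)
  calc dist (∫ x in s, φ i x • (g x - c) ∂μ) 0
      ≤ ∫ x in s, ε / 2 * φ i x + C * (ball x₀ δ)ᶜ.indicator (φ i) x ∂μ := by
        rw [dist_zero_right]
        exact norm_integral_le_of_norm_le hmaj.integrableOn hbound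
    _ ≤ ∫ x, ε / 2 * φ i x + C * (ball x₀ δ)ᶜ.indicator (φ i) x ∂μ := by
        refine setIntegral_le_integral hmaj (Eventually.of_forall fun x => ?_)
        exact add_nonneg (mul_nonneg (half_pos hε).le (h0 x))
          (mul_nonneg hC0 (indicator_nonneg (fun x _ => h0 x) x))
    _ = ε / 2 + C * (1 - ∫ x in ball x₀ δ, φ i x ∂μ) := by
        rw [integral_add (hint.const_mul _)
            ((hint.indicator measurableSet_ball.compl).const_mul C), integral_const_mul,
          integral_const_mul, integral_indicator measurableSet_ball.compl,
          setIntegral_compl measurableSet_ball hint, h1, mul_one]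
    _ < ε := by linarith

theorem tendsto_setIntegral_orthant_poissonKernelPi_smul {d : ℕ} {E : Type*}
    [NormedAddCommGroup E] [NormedSpace ℝ E] [CompleteSpace E] {g : (Fin d → ℝ) → E}
    (hg : MemLp g ∞ volume) (k : Fin d → Fin 2) {c : E} (hgc : Tendsto g (𝓝[orthant d k] 0) (𝓝 c)) :
    Tendsto (fun θ => ∫ y in orthant d k, poissonKernelPi d θ y • g y) (𝓝[>] 0)
      (𝓝 ((2⁻¹ : ℝ) ^ d • c)) := by
  have hθ_pos : ∀ᶠ θ in 𝓝[>] (0 : ℝ), 0 < θ := self_mem_nhdsWithin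
  have herror := tendsto_setIntegral_smul_sub_of_tendsto_nhdsWithin
    (hθ_pos.mono fun θ hθ => poissonKernelPi_nonneg hθ.le)
    (hθ_pos.mono fun θ hθ => integrable_poissonKernelPi hθ.le)
    (hθ_pos.mono fun θ hθ => integral_poissonKernelPi hθ)
    (fun δ hδ => tendsto_integral_ball_poissonKernelPi hδ) hg (measurableSet_orthant d k) hgc
  refine (zero_add ((2⁻¹ : ℝ) ^ d • c) ▸ herror.add_const ((2⁻¹ : ℝ) ^ d • c)).congr' ?_
  filter_upwards [hθ_pos] with θ hθ
  have hint := integrable_poissonKernelPi (d := d) hθ.le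
  have hint_g : Integrable (fun y => poissonKernelPi d θ y • g y) := hint.smul_of_top_left hg
  simp_rw [smul_sub]
  rw [integral_sub hint_g.integrableOn (hint.smul_const c).integrableOn,
    integral_smul_const, integral_orthant_poissonKernelPi hθ, sub_add_cancel]

theorem poisson_fejer_pi_general (d : ℕ)
    (f : (Fin d → ℝ) → ℂ) (hf : MemLp f ⊤ volume)
    (x : Fin d → ℝ) (L : (Fin d → Fin 2) → ℂ)
    (hL : ∀ k : Fin d → Fin 2,
      Tendsto (fun y => f (x - y)) (𝓝[orthant d k] 0) (𝓝 (L k))) :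
    Tendsto (fun θ : ℝ => ∫ y, (poissonKernelPi d θ y : ℂ) * f (x - y))
      (𝓝[>] 0) (𝓝 (((2 : ℂ) ^ d)⁻¹ * ∑ k : Fin d → Fin 2, L k)) := by
  have hg : MemLp (fun y => f (x - y)) ∞ volume :=
    hf.comp_measurePreserving (Measure.measurePreserving_sub_left volume x)
  have hsum := tendsto_finsetSum Finset.univ fun k _ =>
    tendsto_setIntegral_orthant_poissonKernelPi_smul hg k (hL k)
  rw [← Finset.smul_sum, Complex.real_smul, Complex.ofReal_pow, Complex.ofReal_inv,
    Complex.ofReal_ofNat, inv_pow] at hsum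
  refine hsum.congr' ?_
  filter_upwards [self_mem_nhdsWithin] with θ (hθ : 0 < θ)
  simp_rw [← Complex.real_smul]
  exact (integral_eq_sum_orthant ((integrable_poissonKernelPi hθ.le).smul_of_top_left hg)).symm

/-- Fejér-type theorem for the Poisson kernel on `ℝ^d`, `d ≥ 2`: if `f ∈ L^∞(ℝ^d)` and all
`2^d` orthant limits `f(x, J_k) = lim_{y→0, y ∈ J_k} f(x-y)` exist, then
`(P_θ^d * f)(x) → 2^{-d} ∑_k f(x, J_k)` as `θ → 0⁺`. -/
theorem poisson_fejer_pi (d : ℕ) (hd : 2 ≤ d)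
    (f : (Fin d → ℝ) → ℂ) (hf : MemLp f ⊤ volume)
    (x : Fin d → ℝ) (L : (Fin d → Fin 2) → ℂ)
    (hL : ∀ k : Fin d → Fin 2,
      Tendsto (fun y => f (x - y)) (𝓝[orthant d k] 0) (𝓝 (L k))) :
    Tendsto (fun θ : ℝ => ∫ y, (poissonKernelPi d θ y : ℂ) * f (x - y))
      (𝓝[>] 0) (𝓝 (((2 : ℂ) ^ d)⁻¹ * ∑ k : Fin d → Fin 2, L k)) :=
  poisson_fejer_pi_general d f hf x L hL
end

section
/- Let F be the ax+b group, realized as ℝ_{>0} × ℝ with multiplication (a,b)·(a',b') = (aa', ab'+b), identity (1,0), and left Haar measure dμ = a^{−2} da db, and let Φ_θ (0 < θ < 1) be given by Φ_θ(a,b) = (a²/(πθ³))√(θ² − b²) when 1−θ < a < 1+θ, −θ ≤ b ≤ θ, and 0 otherwise. Set A_1 = (0,1]×(−∞,0], A_2 = (0,1]×(0,∞), A_3 = (1,∞)×(−∞,0], A_4 = (1,∞)×(0,∞). If f ∈ L¹(F) or f ∈ L^∞(F) and x ∈ F are such that for every 1 ≤ j ≤ 4 the limit f(x,A_j) := lim_{y→(1,0),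 y∈A_j} f(y⁻¹x) exists, then lim_{θ→0⁺} (Φ_θ * f)(x) = (1/4) Σ_{j=1}^4 f(x,A_j). -/
open MeasureTheory Filter Topology Real

/-- The left Haar measure `a⁻² da db` of the `ax+b` group `F = ℝ_{>0} × ℝ`, realized on the
ambient space `ℝ × ℝ` by extending the density by `0` for `a ≤ 0`. -/
noncomputable def haarAffine : Measure (ℝ × ℝ) :=
  volume.withDensity fun p => if 0 < p.1 then ENNReal.ofReal ((p.1 ^ 2)⁻¹) else 0

/-- In the `ax+b` group with multiplication `(a,b)·(a',b') = (aa', ab'+b)`, the product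
`y⁻¹ · x = (x₁/y₁, (x₂ - y₂)/y₁)`. -/
noncomputable def affineInvMul (y x : ℝ × ℝ) : ℝ × ℝ := (x.1 / y.1, (x.2 - y.2) / y.1)

/-- The kernel `Φ_θ(a,b) = (a²/(πθ³))√(θ² - b²)` for `1-θ < a < 1+θ`, `-θ ≤ b ≤ θ`,
and `0` otherwise. -/
noncomputable def affineKernel (θ : ℝ) (p : ℝ × ℝ) : ℝ :=
  if 1 - θ < p.1 ∧ p.1 < 1 + θ ∧ -θ ≤ p.2 ∧ p.2 ≤ θ then
    p.1 ^ 2 / (π * θ ^ 3) * Real.sqrt (θ ^ 2 - p.2 ^ 2)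
  else 0

/-- The local partition `A_1 = (0,1]×(-∞,0]`, `A_2 = (0,1]×(0,∞)`, `A_3 = (1,∞)×(-∞,0]`,
`A_4 = (1,∞)×(0,∞)` of the `ax+b` group. -/
def affinePartition : Fin 4 → Set (ℝ × ℝ) :=
  ![Set.Ioc 0 1 ×ˢ Set.Iic 0, Set.Ioc 0 1 ×ˢ Set.Ioi 0,
    Set.Ioi 1 ×ˢ Set.Iic 0, Set.Ioi 1 ×ˢ Set.Ioi 0]

/-!
The kernel `Φ_θ` is a nonnegative approximate identity concentrated in the `θ`-box around the
identity `(1, 0)`. Against the Haar measure `a⁻² da db` its factor `a²` cancels the density, so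
`Φ_θ dμ` is the product of the uniform density `1/(2θ)` on `(1-θ, 1+θ)` and a semicircle density
on `[-θ, θ]`. Both factors are symmetric about the identity, so each quadrant `A_j` carries mass
exactly `1/4`, and the restriction of `Φ_θ` to `A_j` is an approximate identity of mass `1/4`
concentrated at `(1, 0)` within `A_j`. Integrating `y ↦ f(y⁻¹x)` against it therefore tends to
`f(x, A_j)/4`, and the four quadrants add up to the claim. Measurability of `y ↦ f(y⁻¹x)` comes
from `y ↦ y⁻¹x` preserving Haar-null sets.
-/

open Set

section ApproximateIdentity

variable {ι X E : Type*} [TopologicalSpace X] [NormedAddCommGroup E] [NormedSpace ℝ E]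
  {l : Filter ι} {K : ι → X → ℝ} {g : X → E} {s : Set X} {z : X} {L : E}

theorem eventually_norm_smul_sub_le (hK_nonneg : ∀ᶠ i in l, 0 ≤ K i)
    (hK_supp : ∀ U ∈ 𝓝[s] z, ∀ᶠ i in l, Function.support (K i) ⊆ U)
    (hg : Tendsto g (𝓝[s] z) (𝓝 L)) {ε : ℝ} (hε : 0 < ε) :
    ∀ᶠ i in l, ∀ y, ‖K i y • (g y - L)‖ ≤ ε * K i y := by
  filter_upwards [hK_nonneg, hK_supp _ (hg (Metric.closedBall_mem_nhds L hε))]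
    with i hnonneg hsupp y
  by_cases hy : K i y = 0
  · simp [hy]
  · rw [norm_smul, Real.norm_of_nonneg (hnonneg y), mul_comm, ← dist_eq_norm]
    exact mul_le_mul_of_nonneg_right (hsupp hy) (hnonneg y)

variable [MeasurableSpace X] {μ : Measure X}

theorem eventually_integrable_smul_sub (hK_nonneg : ∀ᶠ i in l, 0 ≤ K i)
    (hK_int : ∀ᶠ i in l, Integrable (K i) μ)
    (hK_supp : ∀ U ∈ 𝓝[s] z, ∀ᶠ i in l, Function.support (K i) ⊆ U)
    (hg_meas : AEStronglyMeasurable g μ) (hg : Tendsto g (𝓝[s] z) (𝓝 L)) :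
    ∀ᶠ i in l, Integrable (fun y => K i y • (g y - L)) μ := by
  filter_upwards [hK_int, eventually_norm_smul_sub_le hK_nonneg hK_supp hg one_pos]
    with i hint hle
  exact (hint.const_mul 1).mono'
    (hint.aestronglyMeasurable.smul (hg_meas.sub aestronglyMeasurable_const)) (ae_of_all _ hle)

theorem eventually_integrable_smul (hK_nonneg : ∀ᶠ i in l, 0 ≤ K i)
    (hK_int : ∀ᶠ i in l, Integrable (K i) μ)
    (hK_supp : ∀ U ∈ 𝓝[s] z, ∀ᶠ i in l, Function.support (K i) ⊆ U)
    (hg_meas : AEStronglyMeasurable g μ) (hg : Tendsto g (𝓝[s] z) (𝓝 L)) :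
    ∀ᶠ i in l, Integrable (fun y => K i y • g y) μ := by
  filter_upwards [eventually_integrable_smul_sub hK_nonneg hK_int hK_supp hg_meas hg, hK_int]
    with i hsub hint
  refine (hsub.add (hint.smul_const L)).congr (ae_of_all _ fun y => ?_)
  simp [smul_sub]

theorem tendsto_integral_smul_of_tendsto_nhdsWithin [CompleteSpace E] {c : ℝ}
    (hK_nonneg : ∀ᶠ i in l, 0 ≤ K i) (hK_int : ∀ᶠ i in l, Integrable (K i) μ)
    (hK_mass : ∀ᶠ i in l, ∫ y, K i y ∂μ = c)
    (hK_supp : ∀ U ∈ 𝓝[s] z, ∀ᶠ i in l, Function.support (K i) ⊆ U)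
    (hg_meas : AEStronglyMeasurable g μ) (hg : Tendsto g (𝓝[s] z) (𝓝 L)) :
    Tendsto (fun i => ∫ y, K i y • g y ∂μ) l (𝓝 (c • L)) := by
  have herror : Tendsto (fun i => ∫ y, K i y • (g y - L) ∂μ) l (𝓝 0) := by
    refine NormedAddGroup.tendsto_nhds_zero.2 fun ε hε => ?_
    have hδ : 0 < ε / (|c| + 1) := by positivity
    filter_upwards [eventually_norm_smul_sub_le hK_nonneg hK_supp hg hδ, hK_int, hK_mass]
      with i hle hint hmass
    calc ‖∫ y, K i y • (g y - L) ∂μ‖ ≤ ∫ y, ε / (|c| + 1) * K i y ∂μ :=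
          norm_integral_le_of_norm_le (hint.const_mul _) (ae_of_all _ hle)
      _ = ε / (|c| + 1) * c := by rw [integral_const_mul, hmass]
      _ ≤ ε / (|c| + 1) * |c| := mul_le_mul_of_nonneg_left (le_abs_self c) hδ.le
      _ < ε := by
        rw [div_mul_eq_mul_div, div_lt_iff₀ (by positivity)]
        nlinarith [abs_nonneg c]
  have hsplit : ∀ᶠ i in l, c • L + ∫ y, K i y • (g y - L) ∂μ = ∫ y, K i y • g y ∂μ := by
    filter_upwards [eventually_integrable_smul_sub hK_nonneg hK_int hK_supp hg_meas hg, hK_int,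
      hK_mass] with i hsub hint hmass
    rw [← hmass, ← integral_smul_const, ← integral_add (hint.smul_const L) hsub]
    simp only [smul_sub, add_sub_cancel]
  simpa using (tendsto_const_nhds.add herror).congr' hsplit

theorem tendsto_integral_sum_smul_of_tendsto_nhdsWithin [CompleteSpace E] {κ : Type*}
    [Fintype κ] {K : κ → ι → X → ℝ} {s : κ → Set X} {c : κ → ℝ} {L : κ → E}
    (hK_nonneg : ∀ j, ∀ᶠ i in l, 0 ≤ K j i) (hK_int : ∀ j, ∀ᶠ i in l, Integrable (K j i) μ)
    (hK_mass : ∀ j, ∀ᶠ i in l, ∫ y, K j i y ∂μ = c j)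
    (hK_supp : ∀ j, ∀ U ∈ 𝓝[s j] z, ∀ᶠ i in l, Function.support (K j i) ⊆ U)
    (hg_meas : AEStronglyMeasurable g μ) (hg : ∀ j, Tendsto g (𝓝[s j] z) (𝓝 (L j))) :
    Tendsto (fun i => ∫ y, (∑ j, K j i y) • g y ∂μ) l (𝓝 (∑ j, c j • L j)) := by
  have hint : ∀ᶠ i in l, ∀ j, Integrable (fun y => K j i y • g y) μ :=
    eventually_all.2 fun j =>
      eventually_integrable_smul (hK_nonneg j) (hK_int j) (hK_supp j) hg_meas (hg j)
  refine (tendsto_finsetSum _ fun j _ => tendsto_integral_smul_of_tendsto_nhdsWithin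
    (hK_nonneg j) (hK_int j) (hK_mass j) (hK_supp j) hg_meas (hg j)).congr' ?_
  filter_upwards [hint] with i hi
  simp_rw [Finset.sum_smul]
  exact (integral_finsetSum _ fun j _ => hi j).symm

end ApproximateIdentity

theorem integral_sqrt_sq_sub_sq {r : ℝ} (hr : 0 ≤ r) :
    ∫ b in -r..r, √(r ^ 2 - b ^ 2) = π * r ^ 2 / 2 := by
  rcases hr.eq_or_lt with rfl | hr
  · simp
  have hscale (b : ℝ) : √(r ^ 2 - b ^ 2) = r * √(1 - (b / r) ^ 2) := by
    rw [← sqrt_sq hr.le, ← sqrt_mul (sq_nonneg _), sqrt_sq hr.le]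
    congr 1
    field_simp
  simp_rw [hscale, intervalIntegral.integral_const_mul,
    intervalIntegral.integral_comp_div (fun b => √(1 - b ^ 2)) hr.ne', neg_div,
    div_self hr.ne', integral_sqrt_one_sub_sq, smul_eq_mul]
  ring

theorem integral_sqrt_sq_sub_sq_left_eq_right {r : ℝ} :
    ∫ b in -r..0, √(r ^ 2 - b ^ 2) = ∫ b in (0)..r, √(r ^ 2 - b ^ 2) := by
  have hsymm := intervalIntegral.integral_comp_neg (a := 0) (b := r) fun b => √(r ^ 2 - b ^ 2)
  simp only [neg_sq, neg_zero] at hsymm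
  exact hsymm.symm

theorem integral_sqrt_sq_sub_sq_right {r : ℝ} (hr : 0 ≤ r) :
    ∫ b in (0)..r, √(r ^ 2 - b ^ 2) = π * r ^ 2 / 4 := by
  have hcont : Continuous fun b : ℝ => √(r ^ 2 - b ^ 2) := by fun_prop
  have hadd := intervalIntegral.integral_add_adjacent_intervals (μ := volume)
    (hcont.intervalIntegrable (-r) 0) (hcont.intervalIntegrable 0 r)
  rw [integral_sqrt_sq_sub_sq_left_eq_right, integral_sqrt_sq_sub_sq hr] at hadd
  linarith

theorem integral_sqrt_sq_sub_sq_left {r : ℝ} (hr : 0 ≤ r) :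
    ∫ b in -r..0, √(r ^ 2 - b ^ 2) = π * r ^ 2 / 4 := by
  rw [integral_sqrt_sq_sub_sq_left_eq_right, integral_sqrt_sq_sub_sq_right hr]

theorem haarAffine_eq_withDensity_restrict :
    haarAffine = (volume.restrict {p : ℝ × ℝ | 0 < p.1}).withDensity
      fun p => ENNReal.ofReal (p.1 ^ 2)⁻¹ := by
  rw [← withDensity_indicator (measurableSet_lt measurable_const measurable_fst)]
  rfl

theorem haarAffine_absolutelyContinuous :
    haarAffine ≪ volume.restrict {p : ℝ × ℝ | 0 < p.1} := by
  rw [haarAffine_eq_withDensity_restrict]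
  exact withDensity_absolutelyContinuous _ _

theorem absolutelyContinuous_haarAffine :
    volume.restrict {p : ℝ × ℝ | 0 < p.1} ≪ haarAffine := by
  rw [haarAffine_eq_withDensity_restrict]
  refine withDensity_absolutelyContinuous' (by fun_prop) ?_
  filter_upwards [ae_restrict_mem (measurableSet_lt measurable_const measurable_fst)] with p hp
  exact (ENNReal.ofReal_pos.2 (inv_pos.2 (pow_pos hp 2))).ne'

theorem measurable_affineInvMul (x : ℝ × ℝ) : Measurable fun y => affineInvMul y x := by
  unfold affineInvMul
  fun_prop

theorem quasiMeasurePreserving_affineInvMul_restrict {x : ℝ × ℝ} (hx : 0 < x.1) :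
    Measure.QuasiMeasurePreserving (fun y => affineInvMul y x)
      (volume.restrict {p : ℝ × ℝ | 0 < p.1}) (volume.restrict {p : ℝ × ℝ | 0 < p.1}) := by
  set P := {p : ℝ × ℝ | 0 < p.1}
  -- On `P`, `y ↦ y⁻¹ x` is inverted by the smooth map `ρ z = x z⁻¹`, which preserves null sets.
  set ρ : ℝ × ℝ → ℝ × ℝ := fun z => (x.1 / z.1, x.2 - x.1 * z.2 / z.1)
  have hpreimage (S : Set (ℝ × ℝ)) : (fun y => affineInvMul y x) ⁻¹' S ∩ P ⊆ ρ '' (S ∩ P) := by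
    rintro y ⟨hyS, hyP : 0 < y.1⟩
    refine ⟨affineInvMul y x, ⟨hyS, div_pos hx hyP⟩, Prod.ext ?_ ?_⟩
    · simp only [ρ, affineInvMul]
      field_simp
    · simp only [ρ, affineInvMul]
      field_simp
      ring
  have hρ : DifferentiableOn ℝ ρ P := fun z (hz : 0 < z.1) =>
    DifferentiableAt.differentiableWithinAt (by fun_prop (disch := exact hz.ne'))
  refine ⟨measurable_affineInvMul x, Measure.AbsolutelyContinuous.mk fun S hS hS0 => ?_⟩
  rw [Measure.restrict_apply hS] at hS0
  rw [Measure.map_apply (measurable_affineInvMul x) hS,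
    Measure.restrict_apply (measurable_affineInvMul x hS)]
  exact measure_mono_null (hpreimage S)
    (addHaar_image_eq_zero_of_differentiableOn_of_addHaar_eq_zero volume
      (hρ.mono inter_subset_right) hS0)

theorem quasiMeasurePreserving_affineInvMul {x : ℝ × ℝ} (hx : 0 < x.1) :
    Measure.QuasiMeasurePreserving (fun y => affineInvMul y x) haarAffine haarAffine :=
  (quasiMeasurePreserving_affineInvMul_restrict hx).mono haarAffine_absolutelyContinuous
    absolutelyContinuous_haarAffine

section HaarAffineIntegral

variable {E : Type*} [NormedAddCommGroup E] [NormedSpace ℝ E]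

theorem measurable_haarAffine_density :
    Measurable fun p : ℝ × ℝ => if 0 < p.1 then ENNReal.ofReal (p.1 ^ 2)⁻¹ else 0 :=
  Measurable.ite (measurableSet_lt measurable_const measurable_fst) (by fun_prop) measurable_const

theorem toReal_haarAffine_density (y : ℝ × ℝ) :
    (if 0 < y.1 then ENNReal.ofReal (y.1 ^ 2)⁻¹ else 0).toReal =
      if 0 < y.1 then (y.1 ^ 2)⁻¹ else 0 := by
  split_ifs
  · exact ENNReal.toReal_ofReal (by positivity)
  · exact ENNReal.toReal_zero

theorem integral_haarAffine (g : ℝ × ℝ → E) :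
    ∫ y, g y ∂haarAffine = ∫ y, (if 0 < y.1 then (y.1 ^ 2)⁻¹ else 0) • g y := by
  rw [haarAffine, integral_withDensity_eq_integral_toReal_smul measurable_haarAffine_density
    (ae_of_all _ fun p => by split_ifs <;> simp)]
  simp_rw [toReal_haarAffine_density]

theorem integrable_haarAffine_iff {g : ℝ × ℝ → E} :
    Integrable g haarAffine ↔
      Integrable (fun y => (if 0 < y.1 then (y.1 ^ 2)⁻¹ else 0) • g y) := by
  rw [haarAffine, integrable_withDensity_iff_integrable_smul' measurable_haarAffine_density
    (ae_of_all _ fun p => by split_ifs <;> simp)]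
  simp_rw [toReal_haarAffine_density]

variable {Sa Sb : Set ℝ} {v : ℝ → ℝ}

theorem haarDensity_smul_indicator_prod (hpos : Sa ⊆ Ioi 0) (y : ℝ × ℝ) :
    (if 0 < y.1 then (y.1 ^ 2)⁻¹ else 0) • (Sa ×ˢ Sb).indicator (fun y => y.1 ^ 2 * v y.2) y =
      Sa.indicator 1 y.1 * Sb.indicator v y.2 := by
  by_cases hy : y ∈ Sa ×ˢ Sb
  · have hy1 : 0 < y.1 := hpos hy.1
    simp [indicator_of_mem hy, indicator_of_mem hy.1, indicator_of_mem hy.2, hy1, hy1.ne']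
  · rw [indicator_of_notMem hy, smul_zero]
    rcases not_and_or.1 hy with h | h <;> simp [indicator_of_notMem h]

theorem integrable_haarAffine_indicator_prod (hpos : Sa ⊆ Ioi 0) (hSa : MeasurableSet Sa)
    (hSb : MeasurableSet Sb) (hSa_fin : volume Sa ≠ ⊤) (hv : IntegrableOn v Sb) :
    Integrable ((Sa ×ˢ Sb).indicator fun y => y.1 ^ 2 * v y.2) haarAffine := by
  rw [integrable_haarAffine_iff]
  simp_rw [haarDensity_smul_indicator_prod hpos]
  rw [Measure.volume_eq_prod]
  exact Integrable.mul_prod ((integrable_indicator_iff hSa).2 (integrableOn_const hSa_fin))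
    ((integrable_indicator_iff hSb).2 hv)

theorem integral_haarAffine_indicator_prod (hpos : Sa ⊆ Ioi 0) (hSa : MeasurableSet Sa)
    (hSb : MeasurableSet Sb) :
    ∫ y, (Sa ×ˢ Sb).indicator (fun y => y.1 ^ 2 * v y.2) y ∂haarAffine =
      volume.real Sa * ∫ b in Sb, v b := by
  rw [integral_haarAffine]
  simp_rw [haarDensity_smul_indicator_prod hpos]
  rw [Measure.volume_eq_prod, integral_prod_mul, integral_indicator_one hSa,
    integral_indicator hSb]

end HaarAffineIntegral

theorem affineKernel_nonneg (θ : ℝ) : 0 ≤ affineKernel θ := by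
  intro y
  unfold affineKernel
  split_ifs with h
  · have hθ : 0 < θ := by linarith [h.1, h.2.1]
    positivity
  · exact le_rfl

theorem affineKernel_eq_indicator (θ : ℝ) :
    affineKernel θ = (Ioo (1 - θ) (1 + θ) ×ˢ Icc (-θ) θ).indicator
      fun y => y.1 ^ 2 * (√(θ ^ 2 - y.2 ^ 2) / (π * θ ^ 3)) := by
  ext y
  simp only [affineKernel, indicator_apply, mem_prod, mem_Ioo, mem_Icc, and_assoc]
  split_ifs <;> ring

theorem support_affineKernel_subset (θ : ℝ) :
    Function.support (affineKernel θ) ⊆ Metric.closedBall (1, 0) θ := by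
  rw [affineKernel_eq_indicator]
  refine (support_indicator_subset).trans fun y ⟨⟨ha₁, ha₂⟩, hb₁, hb₂⟩ => ?_
  simp only [Metric.mem_closedBall, Prod.dist_eq, Real.dist_eq, sub_zero, sup_le_iff, abs_le]
  exact ⟨⟨by linarith, by linarith⟩, hb₁, hb₂⟩

theorem eventually_support_indicator_affineKernel_subset {s U : Set (ℝ × ℝ)}
    (hU : U ∈ 𝓝[s] (1, 0)) :
    ∀ᶠ θ in 𝓝[>] 0, Function.support (s.indicator (affineKernel θ)) ⊆ U := by
  obtain ⟨ε, hε, hball⟩ := Metric.mem_nhdsWithin_iff.1 hU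
  filter_upwards [Ioo_mem_nhdsGT hε] with θ hθ
  rw [support_indicator]
  exact fun y ⟨hys, hyK⟩ =>
    hball ⟨Metric.closedBall_subset_ball hθ.2 (support_affineKernel_subset θ hyK), hys⟩

theorem integrable_affineKernel {θ : ℝ} (hθ : θ ≤ 1) :
    Integrable (affineKernel θ) haarAffine := by
  rw [affineKernel_eq_indicator]
  have hv : Continuous fun b => √(θ ^ 2 - b ^ 2) / (π * θ ^ 3) := by fun_prop
  have hpos : Ioo (1 - θ) (1 + θ) ⊆ Ioi 0 := fun a ha => by
    simp only [mem_Ioi]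
    linarith [ha.1]
  exact integrable_haarAffine_indicator_prod (v := fun b => √(θ ^ 2 - b ^ 2) / (π * θ ^ 3)) hpos
    measurableSet_Ioo measurableSet_Icc measure_Ioo_lt_top.ne hv.integrableOn_Icc

theorem integral_indicator_prod_affineKernel {θ : ℝ} {Sa Sb : Set ℝ} (hpos : Sa ⊆ Ioi 0)
    (hSa : MeasurableSet Sa) (hSb : MeasurableSet Sb) :
    ∫ y, (Sa ×ˢ Sb).indicator (affineKernel θ) y ∂haarAffine =
      volume.real (Sa ∩ Ioo (1 - θ) (1 + θ)) *
        ∫ b in Sb ∩ Icc (-θ) θ, √(θ ^ 2 - b ^ 2) / (π * θ ^ 3) := by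
  rw [affineKernel_eq_indicator, indicator_indicator, prod_inter_prod]
  exact integral_haarAffine_indicator_prod (v := fun b => √(θ ^ 2 - b ^ 2) / (π * θ ^ 3))
    (inter_subset_left.trans hpos)
    (hSa.inter measurableSet_Ioo) (hSb.inter measurableSet_Icc)

theorem volume_real_Ioc_zero_one_inter_Ioo {θ : ℝ} (hθ₀ : 0 < θ) (hθ₁ : θ ≤ 1) :
    volume.real (Ioc 0 1 ∩ Ioo (1 - θ) (1 + θ)) = θ := by
  rw [Ioc_inter_Ioo_of_left_lt (by linarith), max_eq_right (by linarith),
    Real.volume_real_Ioc_of_le (by linarith)]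
  ring

theorem volume_real_Ioi_one_inter_Ioo {θ : ℝ} (hθ : 0 ≤ θ) :
    volume.real (Ioi 1 ∩ Ioo (1 - θ) (1 + θ)) = θ := by
  rw [Ioi_inter_Ioo, max_eq_left (by linarith), Real.volume_real_Ioo_of_le (by linarith)]
  ring

theorem integral_sqrt_div_Iic_inter_Icc {θ : ℝ} (hθ : 0 < θ) :
    ∫ b in Iic 0 ∩ Icc (-θ) θ, √(θ ^ 2 - b ^ 2) / (π * θ ^ 3) = (4 * θ)⁻¹ := by
  have hset : Iic 0 ∩ Icc (-θ) θ = Icc (-θ) 0 := by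
    ext b
    simp only [mem_inter_iff, mem_Iic, mem_Icc]
    constructor <;> intro hb <;> refine ⟨?_, ?_⟩ <;> try constructor
    all_goals linarith [hb.1, hb.2]
  rw [hset, integral_Icc_eq_integral_Ioc, ← intervalIntegral.integral_of_le (by linarith),
    intervalIntegral.integral_div, integral_sqrt_sq_sub_sq_left hθ.le]
  field_simp

theorem integral_sqrt_div_Ioi_inter_Icc {θ : ℝ} (hθ : 0 < θ) :
    ∫ b in Ioi 0 ∩ Icc (-θ) θ, √(θ ^ 2 - b ^ 2) / (π * θ ^ 3) = (4 * θ)⁻¹ := by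
  have hset : Ioi 0 ∩ Icc (-θ) θ = Ioc 0 θ := by
    ext b
    simp only [mem_inter_iff, mem_Ioi, mem_Icc, mem_Ioc]
    constructor <;> intro hb <;> refine ⟨?_, ?_⟩ <;> try constructor
    all_goals linarith [hb.1, hb.2]
  rw [hset, ← intervalIntegral.integral_of_le hθ.le, intervalIntegral.integral_div,
    integral_sqrt_sq_sub_sq_right hθ.le]
  field_simp

theorem measurableSet_affinePartition (j : Fin 4) : MeasurableSet (affinePartition j) := by
  fin_cases j <;> simp only [affinePartition] <;> measurability

theorem integral_indicator_affinePartition_affineKernel {θ : ℝ} (hθ₀ : 0 < θ) (hθ₁ : θ < 1)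
    (j : Fin 4) : ∫ y, (affinePartition j).indicator (affineKernel θ) y ∂haarAffine = 1 / 4 := by
  have hquarter {Sa Sb : Set ℝ} (hpos : Sa ⊆ Ioi 0) (hSa : MeasurableSet Sa)
      (hSb : MeasurableSet Sb) (ha : volume.real (Sa ∩ Ioo (1 - θ) (1 + θ)) = θ)
      (hb : ∫ b in Sb ∩ Icc (-θ) θ, √(θ ^ 2 - b ^ 2) / (π * θ ^ 3) = (4 * θ)⁻¹) :
      ∫ y, (Sa ×ˢ Sb).indicator (affineKernel θ) y ∂haarAffine = 1 / 4 := by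
    rw [integral_indicator_prod_affineKernel hpos hSa hSb, ha, hb]
    field_simp
  have hIoi : Ioi (1 : ℝ) ⊆ Ioi 0 := Ioi_subset_Ioi zero_le_one
  fin_cases j
  · exact hquarter Ioc_subset_Ioi_self measurableSet_Ioc measurableSet_Iic
      (volume_real_Ioc_zero_one_inter_Ioo hθ₀ hθ₁.le) (integral_sqrt_div_Iic_inter_Icc hθ₀)
  · exact hquarter Ioc_subset_Ioi_self measurableSet_Ioc measurableSet_Ioi
      (volume_real_Ioc_zero_one_inter_Ioo hθ₀ hθ₁.le) (integral_sqrt_div_Ioi_inter_Icc hθ₀)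
  · exact hquarter hIoi measurableSet_Ioi measurableSet_Iic
      (volume_real_Ioi_one_inter_Ioo hθ₀.le) (integral_sqrt_div_Iic_inter_Icc hθ₀)
  · exact hquarter hIoi measurableSet_Ioi measurableSet_Ioi
      (volume_real_Ioi_one_inter_Ioo hθ₀.le) (integral_sqrt_div_Ioi_inter_Icc hθ₀)

theorem sum_indicator_affinePartition {M : Type*} [AddCommMonoid M] (h : ℝ × ℝ → M)
    (y : ℝ × ℝ) :
    ∑ j, (affinePartition j).indicator h y = {p : ℝ × ℝ | 0 < p.1}.indicator h y := by
  simp only [Fin.sum_univ_four, affinePartition, Matrix.cons_val, indicator_apply, mem_prod,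
    mem_Ioc, mem_Iic, mem_Ioi, mem_ofPred_eq]
  rcases le_or_gt y.1 1 with h1 | h1 <;> rcases le_or_gt y.2 0 with h2 | h2
  · simp [h1, h2, not_lt.2 h1, not_lt.2 h2]
  · simp [h1, h2, not_lt.2 h1, not_le.2 h2]
  · simp [h1, h2, not_le.2 h1, not_lt.2 h2, zero_lt_one.trans h1]
  · simp [h1, h2, not_le.2 h1, not_le.2 h2, zero_lt_one.trans h1]

theorem affineKernel_eq_sum_indicator {θ : ℝ} (hθ : θ < 1) (y : ℝ × ℝ) :
    affineKernel θ y = ∑ j, (affinePartition j).indicator (affineKernel θ) y := by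
  rw [sum_indicator_affinePartition, indicator_eq_self.2 ((support_affineKernel_subset θ).trans
    fun p hp => ?_)]
  simp only [Metric.mem_closedBall, Prod.dist_eq, Real.dist_eq, sup_le_iff, abs_le] at hp
  show 0 < p.1
  linarith [hp.1.1]

/-- Fejér-type theorem for the `ax+b` group `F`: if `f ∈ L¹(F)` or `f ∈ L^∞(F)` and, at a
point `x` of `F`, each limit `f(x, A_j) = lim_{y→(1,0), y ∈ A_j} f(y⁻¹x)` exists, then
`(Φ_θ * f)(x) → (1/4) ∑_{j=1}^4 f(x, A_j)` as `θ → 0⁺`. -/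
theorem affine_fejer (f : ℝ × ℝ → ℂ)
    (hf : Integrable f haarAffine ∨ MemLp f ⊤ haarAffine)
    (x : ℝ × ℝ) (hx : 0 < x.1) (L : Fin 4 → ℂ)
    (hL : ∀ j : Fin 4, Tendsto (fun y => f (affineInvMul y x))
      (𝓝[affinePartition j] ((1 : ℝ), (0 : ℝ))) (𝓝 (L j))) :
    Tendsto (fun θ : ℝ => ∫ y, (affineKernel θ y : ℂ) * f (affineInvMul y x) ∂haarAffine)
      (𝓝[>] 0) (𝓝 ((1/4) * ∑ j, L j)) := by
  have hf_meas : AEStronglyMeasurable f haarAffine :=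
    hf.elim Integrable.aestronglyMeasurable MemLp.aestronglyMeasurable
  have hg : AEStronglyMeasurable (fun y => f (affineInvMul y x)) haarAffine :=
    hf_meas.comp_quasiMeasurePreserving (quasiMeasurePreserving_affineInvMul hx)
  have hθ : ∀ᶠ θ in 𝓝[>] (0 : ℝ), θ ∈ Ioo 0 1 := Ioo_mem_nhdsGT one_pos
  have hlim := tendsto_integral_sum_smul_of_tendsto_nhdsWithin (c := fun _ => 1 / 4)
    (K := fun j θ => (affinePartition j).indicator (affineKernel θ))
    (fun j => Eventually.of_forall fun θ => indicator_nonneg fun y _ => affineKernel_nonneg θ y)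
    (fun j => hθ.mono fun θ hθ =>
      (integrable_affineKernel hθ.2.le).indicator (measurableSet_affinePartition j))
    (fun j => hθ.mono fun θ hθ => integral_indicator_affinePartition_affineKernel hθ.1 hθ.2 j)
    (fun j U hU => eventually_support_indicator_affineKernel_subset hU) hg hL
  have hsum : ∑ j, (1 / 4 : ℝ) • L j = 1 / 4 * ∑ j, L j := by
    simp [Finset.mul_sum, Complex.real_smul]
  rw [← hsum]
  refine hlim.congr' ?_
  filter_upwards [hθ] with θ hθ
  refine integral_congr_ae (ae_of_all _ fun y => ?_)
  dsimp only
  rw [← affineKernel_eq_sum_indicator hθ.2, Complex.real_smul]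
end
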